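/- Let f : (Fin 30 → ℝ) → ℝ be the second modified Griewank function f(x) = (1/4000)·∑_{n=1}^{30} x_n² - ∏_{n=1}^{30} ln(2 + cos(x_n/√n)) + (ln 3)³⁰. Then f(x) ≥ 0 for all x ∈ ℝ³⁰, and f(0) = 0, so the origin is a global minimum point of f with minimum value 0. -/
import Mathlib


open Real Finset

/-- The second modified Griewank function on ℝ³⁰:
`f(x) = (1/4000) ∑ x_n² - ∏ ln(2 + cos(x_n/√n)) + (ln 3)^30`,
with `Fin 30` index `n` corresponding to the coordinate `n+1`. -/
noncomputable def griewankMod2 (x : Fin 30 → ℝ) : ℝ :=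
  (1 / 4000) * ∑ n : Fin 30, (x n) ^ 2 -
    ∏ n : Fin 30, Real.log (2 + Real.cos (x n / Real.sqrt ((n : ℝ) + 1))) +
    (Real.log 3) ^ 30

theorem griewankMod2_global_min :
    (∀ x : Fin 30 → ℝ, 0 ≤ griewankMod2 x) ∧ griewankMod2 0 = 0 := by
  constructor
  · intro x
    unfold griewankMod2
    have hsum : 0 ≤ (1 / 4000 : ℝ) * ∑ n : Fin 30, (x n) ^ 2 := by
      positivity
    have hprod : ∏ n : Fin 30, Real.log (2 + Real.cos (x n / Real.sqrt ((n : ℝ) + 1)))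
        ≤ (Real.log 3) ^ 30 := by
      calc ∏ n : Fin 30, Real.log (2 + Real.cos (x n / Real.sqrt ((n : ℝ) + 1)))
          ≤ ∏ _n : Fin 30, Real.log 3 := by
            apply Finset.prod_le_prod
            · intro i _
              apply Real.log_nonneg
              nlinarith [Real.neg_one_le_cos (x i / Real.sqrt ((i : ℝ) + 1))]
            · intro i _
              apply Real.log_le_log (by nlinarith [Real.neg_one_le_cos (x i / Real.sqrt ((i : ℝ) + 1))])
              nlinarith [Real.cos_le_one (x i / Real.sqrt ((i : ℝ) + 1))]
        _ = (Real.log 3) ^ 30 := by simp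
    linarith
  · unfold griewankMod2
    simp [Real.cos_zero]
    norm_num
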